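/- arXiv:1101.2505 — 3 statements merged into one kernel-verified Lean document; each statement's English description precedes it below -/
import Mathlib

section
/- If an O(V)-invariant homogeneous construction assigns to each alternating form F on V a bilinear form T(F) that is a polynomial of degree 2 in F with values built from complete contractions, and T(F) vanishes whenever F = 0 with T having no F-independent term, then (for positive definite g) T(F)(u,v) = a·⟨ι_u F, ι_v F⟩ + b·|F|²·g(u,v) for some constants a, b. -/
/-!
Subtracting `a • F Fᵀ + b • tr (F Fᵀ) • 1` from `T` leaves a quadratic map that is still
equivariant, and `a`, `b` can be chosen so that it kills every elementary 2-form `eᵢ ∧ eⱼ`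
(`skewSingle i j`): coordinate reflections force `T (eᵢ ∧ eⱼ)` to be diagonal, and permutations leave it only two
possible diagonal entries, one on `{i, j}` and one off it (here a third index is needed).
The polar form of the difference then vanishes on all pairs of elementary 2-forms: a rotation in
the `(v, w)`-plane mixes `eᵤ ∧ eᵥ` with `eᵤ ∧ e_w`, which handles pairs sharing an index, and for
disjoint pairs a reflection in a suitable index flips the sign of exactly one of the two forms.
The elementary 2-forms span the skew-symmetric matrices, so the difference vanishes.
-/

open Matrix

namespace Matrix

variable {ι R : Type*} [DecidableEq ι] [CommRing R]

def skewSingle (i j : ι) : Matrix ι ι R := single i j 1 - single j i 1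

@[simp]
lemma skewSingle_self (i : ι) : skewSingle i i = (0 : Matrix ι ι R) := sub_self _

lemma skewSingle_swap (i j : ι) : skewSingle j i = -(skewSingle i j : Matrix ι ι R) :=
  (neg_sub _ _).symm

@[simp]
lemma transpose_skewSingle (i j : ι) : (skewSingle i j)ᵀ = -(skewSingle i j : Matrix ι ι R) := by
  simp [skewSingle]

lemma submatrix_skewSingle (σ : Equiv.Perm ι) (i j : ι) :
    (skewSingle i j : Matrix ι ι R).submatrix σ σ = skewSingle (σ.symm i) (σ.symm j) := by
  simp [skewSingle, submatrix_sub]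

variable [Fintype ι]

lemma skewSingle_mul_transpose_self {i j : ι} (h : i ≠ j) :
    skewSingle i j * (skewSingle i j)ᵀ = (single i i 1 + single j j 1 : Matrix ι ι R) := by
  simp [skewSingle, sub_mul, mul_sub, single_mul_single_of_ne, h, h.symm]

lemma two_smul_eq_sum_skewSingle {X : Matrix ι ι R} (hX : Xᵀ = -X) :
    (2 : R) • X = ∑ i, ∑ j, X i j • skewSingle i j := by
  have hXt : ∑ i, ∑ j, single j i (X i j) = Xᵀ := by
    rw [Finset.sum_comm, matrix_eq_sum_single Xᵀ]
    simp
  simp only [skewSingle, smul_sub, smul_single, smul_eq_mul, mul_one, Finset.sum_sub_distrib]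
  rw [hXt, ← matrix_eq_sum_single, hX, sub_neg_eq_add, two_smul]

lemma diagonal_mul_skewSingle_mul_diagonal (d : ι → R) (i j : ι) :
    diagonal d * skewSingle i j * diagonal d = (d i * d j) • skewSingle i j := by
  ext x y
  simp only [skewSingle, mul_diagonal, diagonal_mul, sub_apply, smul_apply, single_apply]
  split_ifs with h₁ h₂ h₂ <;> (try obtain ⟨rfl, rfl⟩ := h₁) <;> (try obtain ⟨rfl, rfl⟩ := h₂) <;>
    ring

lemma _root_.LinearMap.apply_eq_zero_of_forall_skewSingle {K M : Type*} [Field K]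
    [NeZero (2 : K)] [AddCommGroup M] [Module K M] (Ψ : Matrix ι ι K →ₗ[K] Matrix ι ι K →ₗ[K] M)
    (h : ∀ i j k l, Ψ (skewSingle i j) (skewSingle k l) = 0) {X Y : Matrix ι ι K}
    (hX : Xᵀ = -X) (hY : Yᵀ = -Y) : Ψ X Y = 0 := by
  have h4 : (2 * 2 : K) • Ψ X Y = 0 := by
    rw [mul_smul, ← LinearMap.smul_apply, ← map_smul, ← map_smul, two_smul_eq_sum_skewSingle hX,
      two_smul_eq_sum_skewSingle hY]
    simp [h]
  exact (smul_eq_zero.mp h4).resolve_left (mul_ne_zero two_ne_zero two_ne_zero)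

lemma diagonal_mul_transpose_self {d : ι → R} (hd : ∀ t, d t * d t = 1) :
    diagonal d * (diagonal d)ᵀ = 1 := by
  rw [diagonal_transpose, diagonal_mul_diagonal, ← diagonal_one]
  exact congrArg diagonal (funext hd)

def planeRotation (v w : ι) (c s : R) : Matrix ι ι R :=
  1 + (c - 1) • (single v v 1 + single w w 1) + s • (single w v 1 - single v w 1)

lemma planeRotation_mul_transpose {v w : ι} (hvw : v ≠ w) {c s : R} (h : c ^ 2 + s ^ 2 = 1) :
    planeRotation v w c s * (planeRotation v w c s)ᵀ = 1 := by
  simp only [planeRotation, transpose_add, transpose_smul, transpose_sub, transpose_one,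
    transpose_single, add_mul, mul_add, sub_mul, mul_sub, smul_mul_assoc, mul_smul_comm,
    Matrix.one_mul, single_mul_single_same, mul_one, single_mul_single_of_ne, hvw, hvw.symm,
    ne_eq, not_false_eq_true]
  match_scalars <;> grind

lemma planeRotation_mul_skewSingle_mul_transpose {u v w : ι} (huv : u ≠ v) (huw : u ≠ w)
    (hvw : v ≠ w) (c s : R) :
    planeRotation v w c s * skewSingle u v * (planeRotation v w c s)ᵀ
      = c • skewSingle u v + s • skewSingle u w := by
  simp only [planeRotation, skewSingle, transpose_add, transpose_smul, transpose_sub,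
    transpose_one, transpose_single, add_mul, mul_add, sub_mul, mul_sub, smul_mul_assoc,
    mul_smul_comm, Matrix.one_mul, single_mul_single_same, mul_one, single_mul_single_of_ne,
    huv, huw, hvw, huv.symm, huw.symm, hvw.symm, ne_eq, not_false_eq_true, smul_zero,
    add_zero, sub_zero]
  match_scalars <;> ring

end Matrix

variable {ι : Type*} [Fintype ι] [DecidableEq ι]

def QuadraticEquivariant (Φ : Matrix ι ι ℝ →ₗ[ℝ] Matrix ι ι ℝ →ₗ[ℝ] Matrix ι ι ℝ) : Prop :=
  ∀ A : Matrix ι ι ℝ, A * Aᵀ = 1 → ∀ X : Matrix ι ι ℝ, Xᵀ = -X →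
    Φ (A * X * Aᵀ) (A * X * Aᵀ) = A * Φ X X * Aᵀ

def contractionForm (a b : ℝ) : Matrix ι ι ℝ →ₗ[ℝ] Matrix ι ι ℝ →ₗ[ℝ] Matrix ι ι ℝ :=
  let mulTranspose :=
    (LinearMap.mul ℝ (Matrix ι ι ℝ)).compl₂ (transposeLinearEquiv ι ι ℝ ℝ).toLinearMap
  a • mulTranspose + b • mulTranspose.compr₂ ((traceLinearMap ι ℝ ℝ).smulRight 1)

lemma contractionForm_apply (a b : ℝ) (X Y : Matrix ι ι ℝ) :
    contractionForm a b X Y = a • (X * Yᵀ) + (b * trace (X * Yᵀ)) • 1 := by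
  simp [contractionForm, mul_smul]

lemma quadraticEquivariant_contractionForm (a b : ℝ) :
    QuadraticEquivariant (contractionForm (ι := ι) a b) := by
  intro A hA X _
  have hA' : Aᵀ * A = 1 := mul_eq_one_comm.mp hA
  have hconj : A * X * Aᵀ * (A * X * Aᵀ)ᵀ = A * (X * Xᵀ) * Aᵀ := by
    simp only [transpose_mul, transpose_transpose, Matrix.mul_assoc, ← Matrix.mul_assoc Aᵀ A, hA',
      Matrix.one_mul]
  have htrace : trace (A * (X * Xᵀ) * Aᵀ) = trace (X * Xᵀ) := by
    rw [trace_mul_cycle, hA', Matrix.one_mul]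
  simp only [contractionForm_apply, hconj, htrace, Matrix.mul_add, Matrix.add_mul, mul_smul_comm,
    smul_mul_assoc, Matrix.mul_one, hA]

namespace QuadraticEquivariant

variable {Φ Ψ : Matrix ι ι ℝ →ₗ[ℝ] Matrix ι ι ℝ →ₗ[ℝ] Matrix ι ι ℝ}

lemma sub (hΦ : QuadraticEquivariant Φ) (hΨ : QuadraticEquivariant Ψ) :
    QuadraticEquivariant (Φ - Ψ) := by
  intro A hA X hX
  simp only [LinearMap.sub_apply, hΦ A hA X hX, hΨ A hA X hX, Matrix.mul_sub, Matrix.sub_mul]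

lemma polar (hΦ : QuadraticEquivariant Φ) {A X Y : Matrix ι ι ℝ} (hA : A * Aᵀ = 1)
    (hX : Xᵀ = -X) (hY : Yᵀ = -Y) :
    Φ (A * X * Aᵀ) (A * Y * Aᵀ) + Φ (A * Y * Aᵀ) (A * X * Aᵀ) = A * (Φ X Y + Φ Y X) * Aᵀ := by
  have hXY : (X + Y)ᵀ = -(X + Y) := by rw [transpose_add, hX, hY, neg_add]
  have h := hΦ A hA (X + Y) hXY
  simp only [Matrix.mul_add, Matrix.add_mul, map_add, LinearMap.add_apply, hΦ A hA X hX,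
    hΦ A hA Y hY] at h ⊢
  linear_combination (norm := abel) h

lemma apply_submatrix (hΦ : QuadraticEquivariant Φ) (σ : Equiv.Perm ι) {X : Matrix ι ι ℝ}
    (hX : Xᵀ = -X) : Φ (X.submatrix σ σ) (X.submatrix σ σ) = (Φ X X).submatrix σ σ := by
  have hconj : ∀ M : Matrix ι ι ℝ, σ.permMatrix ℝ * M * (σ.permMatrix ℝ)ᵀ = M.submatrix σ σ := by
    intro M
    rw [transpose_permMatrix, PEquiv.toMatrix_toPEquiv_mul, PEquiv.mul_toMatrix_toPEquiv,
      submatrix_submatrix]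
    rfl
  have hσ : σ.permMatrix ℝ * (σ.permMatrix ℝ)ᵀ = 1 := by
    rw [transpose_permMatrix, ← permMatrix_mul, inv_mul_cancel, permMatrix_one]
  rw [← hconj, ← hconj, hΦ _ hσ X hX]

lemma apply_skewSingle_self_apply_of_ne (hΦ : QuadraticEquivariant Φ) (i j : ι) {x y : ι}
    (hxy : x ≠ y) : Φ (skewSingle i j) (skewSingle i j) x y = 0 := by
  set d : ι → ℝ := fun t => if t = x then -1 else 1
  have hd : ∀ t, d t * d t = 1 := fun t => by by_cases t = x <;> simp [d, *]
  have h := hΦ _ (diagonal_mul_transpose_self hd) _ (transpose_skewSingle i j)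
  simp only [diagonal_transpose, diagonal_mul_skewSingle_mul_diagonal, map_smul,
    LinearMap.smul_apply, smul_smul, mul_mul_mul_comm, hd, one_mul, one_smul] at h
  have hxy' := congr_fun (congr_fun h x) y
  simp only [mul_diagonal, diagonal_mul, d, if_pos, if_neg hxy.symm] at hxy'
  linarith

lemma apply_skewSingle_perm (hΦ : QuadraticEquivariant Φ) (σ : Equiv.Perm ι) (i j x y : ι) :
    Φ (skewSingle (σ i) (σ j)) (skewSingle (σ i) (σ j)) (σ x) (σ y)
      = Φ (skewSingle i j) (skewSingle i j) x y := by
  have h := hΦ.apply_submatrix σ (transpose_skewSingle (σ i) (σ j))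
  simp only [submatrix_skewSingle, Equiv.symm_apply_apply] at h
  rw [h, submatrix_apply]

lemma apply_skewSingle_self_apply_left_eq (hΦ : QuadraticEquivariant Φ) {i j k l : ι}
    (hij : i ≠ j) (hkl : k ≠ l) :
    Φ (skewSingle i j) (skewSingle i j) i i = Φ (skewSingle k l) (skewSingle k l) k k := by
  obtain ⟨σ, hσ⟩ := Equiv.Perm.exists_extending_pair ![k, l] ![i, j] (by simp [hkl])
    (by simp [hij])
  have hk : σ k = i := hσ 0
  have hl : σ l = j := hσ 1
  rw [← hk, ← hl, hΦ.apply_skewSingle_perm]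

lemma apply_skewSingle_self_apply_eq_of_ne (hΦ : QuadraticEquivariant Φ) {i j x k l y : ι}
    (hij : i ≠ j) (hix : i ≠ x) (hjx : j ≠ x) (hkl : k ≠ l) (hky : k ≠ y) (hly : l ≠ y) :
    Φ (skewSingle i j) (skewSingle i j) x x = Φ (skewSingle k l) (skewSingle k l) y y := by
  have hinj : ∀ {a b c : ι}, a ≠ b → a ≠ c → b ≠ c → Function.Injective ![a, b, c] := by
    intro a b c hab hac hbc s t
    fin_cases s <;> fin_cases t <;> simp [hab, hac, hbc, hab.symm, hac.symm, hbc.symm]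
  obtain ⟨σ, hσ⟩ := Equiv.Perm.exists_extending_pair ![k, l, y] ![i, j, x]
    (hinj hkl hky hly) (hinj hij hix hjx)
  have hk : σ k = i := hσ 0
  have hl : σ l = j := hσ 1
  have hy : σ y = x := hσ 2
  rw [← hk, ← hl, ← hy, hΦ.apply_skewSingle_perm]

lemma exists_apply_skewSingle_self_eq_contractionForm (hΦ : QuadraticEquivariant Φ)
    (hcard : 2 < Fintype.card ι) :
    ∃ a b : ℝ, ∀ i j : ι, Φ (skewSingle i j) (skewSingle i j) =
      contractionForm a b (skewSingle i j) (skewSingle i j) := by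
  obtain ⟨z₀, z₁, z₂, h₀₁, h₀₂, h₁₂⟩ := Fintype.two_lt_card_iff.mp hcard
  set p := Φ (skewSingle z₀ z₁) (skewSingle z₀ z₁) z₀ z₀
  set q := Φ (skewSingle z₀ z₁) (skewSingle z₀ z₁) z₂ z₂
  have hp : ∀ i j, i ≠ j → Φ (skewSingle i j) (skewSingle i j) i i = p :=
    fun i j hij => hΦ.apply_skewSingle_self_apply_left_eq hij h₀₁
  have hq : ∀ i j x, i ≠ j → i ≠ x → j ≠ x → Φ (skewSingle i j) (skewSingle i j) x x = q :=
    fun i j x hij hix hjx => hΦ.apply_skewSingle_self_apply_eq_of_ne hij hix hjx h₀₁ h₀₂ h₁₂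
  refine ⟨p - q, q / 2, fun i j => ?_⟩
  rcases eq_or_ne i j with rfl | hij
  · simp
  ext x y
  rw [contractionForm_apply, skewSingle_mul_transpose_self hij]
  rcases eq_or_ne x y with rfl | hxy
  · rcases eq_or_ne x i with rfl | hxi
    · rw [hp x j hij]
      simp [one_apply, hij.symm]
      ring
    rcases eq_or_ne x j with rfl | hxj
    · simp only [skewSingle_swap x i, map_neg, LinearMap.neg_apply, neg_neg, hp x i hij.symm]
      simp [one_apply, hij]
      ring
    · rw [hq i j x hij hxi.symm hxj.symm]
      simp [one_apply, hxi.symm, hxj.symm]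
      ring
  · have hnot : ∀ t, ¬(t = x ∧ t = y) := fun t h => hxy (h.1.symm.trans h.2)
    rw [hΦ.apply_skewSingle_self_apply_of_ne i j hxy]
    simp [one_apply, hxy, hnot]

lemma polar_skewSingle_of_pairwise_ne (hΦ : QuadraticEquivariant Φ) {i j k l : ι} (hij : i ≠ j)
    (hik : i ≠ k) (hil : i ≠ l) (hjk : j ≠ k) (hjl : j ≠ l) (hkl : k ≠ l) :
    Φ (skewSingle i j) (skewSingle k l) + Φ (skewSingle k l) (skewSingle i j) = 0 := by
  ext x y
  have hcard : ({i, j, k} : Finset ι).card = 3 :=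
    Finset.card_eq_three.mpr ⟨i, j, k, hij, hik, hjk, rfl⟩
  -- reflecting in `m` fixes the `(x, y)` entry but flips exactly one of the two forms
  obtain ⟨m, hm, hmxy⟩ := Finset.exists_mem_notMem_of_card_lt_card (s := {x, y}) (t := {i, j, k})
    (Finset.card_le_two.trans_lt (by rw [hcard]; norm_num))
  simp only [Finset.mem_insert, Finset.mem_singleton, not_or] at hm hmxy
  set d : ι → ℝ := fun t => if t = m then -1 else 1
  have hd : ∀ t, d t * d t = 1 := fun t => by by_cases t = m <;> simp [d, *]
  have hflip : d i * d j * (d k * d l) = -1 := by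
    rcases hm with rfl | rfl | rfl <;>
      simp [d, hij, hik, hjk, hij.symm, hik.symm, hil.symm, hjk.symm, hjl.symm, hkl.symm]
  have h := hΦ.polar (diagonal_mul_transpose_self hd) (transpose_skewSingle i j)
    (transpose_skewSingle k l)
  simp only [diagonal_transpose, diagonal_mul_skewSingle_mul_diagonal, map_smul,
    LinearMap.smul_apply, smul_smul, mul_comm (d k * d l), hflip, neg_one_smul] at h
  have hxy := congr_fun (congr_fun h x) y
  simp [mul_diagonal, diagonal_mul, d, Ne.symm hmxy.1, Ne.symm hmxy.2] at hxy
  rw [Matrix.add_apply, Matrix.zero_apply]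
  linarith

lemma polar_skewSingle_of_apply_self_eq_zero (hΦ : QuadraticEquivariant Φ) {u v w : ι}
    (huv : u ≠ v) (huw : u ≠ w) (hvw : v ≠ w)
    (hv : Φ (skewSingle u v) (skewSingle u v) = 0)
    (hw : Φ (skewSingle u w) (skewSingle u w) = 0) :
    Φ (skewSingle u v) (skewSingle u w) + Φ (skewSingle u w) (skewSingle u v) = 0 := by
  -- any rotation angle with `c * s ≠ 0` works; `(3/5, 4/5)` keeps the arithmetic rational
  have hrot := planeRotation_mul_transpose (R := ℝ) hvw (c := 3 / 5) (s := 4 / 5) (by norm_num)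
  have h := hΦ _ hrot _ (transpose_skewSingle u v)
  rw [planeRotation_mul_skewSingle_mul_transpose huv huw hvw, hv, Matrix.mul_zero,
    Matrix.zero_mul] at h
  simp only [map_add, map_smul, LinearMap.add_apply, LinearMap.smul_apply, hv, hw, smul_zero,
    add_zero, zero_add, smul_smul] at h
  have h' : ((3 / 5 : ℝ) * (4 / 5)) •
      (Φ (skewSingle u v) (skewSingle u w) + Φ (skewSingle u w) (skewSingle u v)) = 0 := by
    rw [← h]
    module
  exact (smul_eq_zero.mp h').resolve_left (by norm_num)

lemma polar_skewSingle_eq_zero (hΦ : QuadraticEquivariant Φ)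
    (h : ∀ i j, Φ (skewSingle i j) (skewSingle i j) = 0) (i j k l : ι) :
    Φ (skewSingle i j) (skewSingle k l) + Φ (skewSingle k l) (skewSingle i j) = 0 := by
  have shared : ∀ u v w : ι,
      Φ (skewSingle u v) (skewSingle u w) + Φ (skewSingle u w) (skewSingle u v) = 0 := by
    intro u v w
    rcases eq_or_ne u v with rfl | huv
    · simp
    rcases eq_or_ne u w with rfl | huw
    · simp
    rcases eq_or_ne v w with rfl | hvw
    · simp [h]
    exact hΦ.polar_skewSingle_of_apply_self_eq_zero huv huw hvw (h u v) (h u w)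
  rcases eq_or_ne i j with rfl | hij
  · simp
  rcases eq_or_ne k l with rfl | hkl
  · simp
  rcases eq_or_ne i k with rfl | hik
  · exact shared i j l
  rcases eq_or_ne i l with rfl | hil
  · simp only [skewSingle_swap i k, map_neg, LinearMap.neg_apply]
    rw [← neg_add, shared i j k, neg_zero]
  rcases eq_or_ne j k with rfl | hjk
  · simp only [skewSingle_swap j i, map_neg, LinearMap.neg_apply]
    rw [← neg_add, shared j i l, neg_zero]
  rcases eq_or_ne j l with rfl | hjl
  · simpa [skewSingle_swap i j, skewSingle_swap k j] using shared j i k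
  exact hΦ.polar_skewSingle_of_pairwise_ne hij hik hil hjk hjl hkl

lemma apply_self_eq_zero (hΦ : QuadraticEquivariant Φ)
    (h : ∀ i j, Φ (skewSingle i j) (skewSingle i j) = 0) {X : Matrix ι ι ℝ} (hX : Xᵀ = -X) :
    Φ X X = 0 := by
  have hsym := (Φ + Φ.flip).apply_eq_zero_of_forall_skewSingle
    (fun i j k l => by simpa using hΦ.polar_skewSingle_eq_zero h i j k l) hX hX
  rw [LinearMap.add_apply, LinearMap.add_apply, LinearMap.flip_apply, ← two_smul ℝ] at hsym
  exact (smul_eq_zero.mp hsym).resolve_left two_ne_zero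

end QuadraticEquivariant

theorem equivariant_quadratic_maps_classification_general
    (n : ℕ) (hn : 3 ≤ n)
    (T : Matrix (Fin n) (Fin n) ℝ → Matrix (Fin n) (Fin n) ℝ)
    (B : Matrix (Fin n) (Fin n) ℝ →ₗ[ℝ] Matrix (Fin n) (Fin n) ℝ →ₗ[ℝ]
      Matrix (Fin n) (Fin n) ℝ)
    (hquad : ∀ F, T F = B F F)
    (hequiv : ∀ A : Matrix (Fin n) (Fin n) ℝ, A * Aᵀ = 1 →
      ∀ F : Matrix (Fin n) (Fin n) ℝ, Fᵀ = -F → T (A * F * Aᵀ) = A * T F * Aᵀ) :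
    ∃ a b : ℝ, ∀ F : Matrix (Fin n) (Fin n) ℝ, Fᵀ = -F →
      T F = a • (F * Fᵀ) + (b * Matrix.trace (F * Fᵀ)) • (1 : Matrix (Fin n) (Fin n) ℝ) := by
  have hB : QuadraticEquivariant B := fun A hA F hF => by
    simpa only [hquad] using hequiv A hA F hF
  obtain ⟨a, b, hab⟩ :=
    hB.exists_apply_skewSingle_self_eq_contractionForm (by rw [Fintype.card_fin]; omega)
  refine ⟨a, b, fun F hF => ?_⟩
  have h := (hB.sub (quadraticEquivariant_contractionForm a b)).apply_self_eq_zero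
    (fun i j => by rw [LinearMap.sub_apply, LinearMap.sub_apply, hab, sub_self]) hF
  rw [hquad, ← contractionForm_apply, ← sub_eq_zero]
  simpa using h

/-- First-fundamental-theorem classification (matrix form): every `O(n)`-equivariant
quadratic polynomial map `T` from antisymmetric matrices (2-forms in an orthonormal
frame) to symmetric matrices — quadraticity being witnessed by a bilinear map `B`
with `T F = B F F` — is of the form `T(F) = a · FFᵀ + b · tr(FFᵀ) · I`
(i.e. `T(F)(u,v) = a ⟨ι_u F, ι_v F⟩ + b |F|² g(u,v)`), for `n ≥ 3`. -/
theorem equivariant_quadratic_maps_classification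
    (n : ℕ) (hn : 3 ≤ n)
    (T : Matrix (Fin n) (Fin n) ℝ → Matrix (Fin n) (Fin n) ℝ)
    (B : Matrix (Fin n) (Fin n) ℝ →ₗ[ℝ] Matrix (Fin n) (Fin n) ℝ →ₗ[ℝ]
      Matrix (Fin n) (Fin n) ℝ)
    (hquad : ∀ F, T F = B F F)
    (hsymval : ∀ F : Matrix (Fin n) (Fin n) ℝ, Fᵀ = -F → (T F)ᵀ = T F)
    (hequiv : ∀ A : Matrix (Fin n) (Fin n) ℝ, A * Aᵀ = 1 →
      ∀ F : Matrix (Fin n) (Fin n) ℝ, Fᵀ = -F → T (A * F * Aᵀ) = A * T F * Aᵀ) :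
    ∃ a b : ℝ, ∀ F : Matrix (Fin n) (Fin n) ℝ, Fᵀ = -F →
      T F = a • (F * Fᵀ) + (b * Matrix.trace (F * Fᵀ)) • (1 : Matrix (Fin n) (Fin n) ℝ) :=
  equivariant_quadratic_maps_classification_general n hn T B hquad hequiv
end

section
/- If a symmetric-matrix-valued O(n)-equivariant polynomial map T on antisymmetric matrices, homogeneous of degree 2, additionally satisfies the weight-0 condition T(g↦λ²g) in matrix form and vanishing divergence for all closed coclosed F on ℝⁿ, then T(F) = c·(FFᵀ - (1/4)tr(FFᵀ)I) for some constant c. -/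
open Matrix

/-- Partial derivative `∂_k f (x)` on `ℝⁿ`. -/
noncomputable def pderiv (n : ℕ) (f : (Fin n → ℝ) → ℝ) (k : Fin n) (x : Fin n → ℝ) : ℝ :=
  fderiv ℝ f x (Pi.single k 1)

private lemma key (n : ℕ) (i0 i1 i2 : Fin n)
    (h01 : i0 ≠ i1) (h02 : i0 ≠ i2) (h12 : i1 ≠ i2)
    (T : Matrix (Fin n) (Fin n) ℝ → Matrix (Fin n) (Fin n) ℝ) (a b : ℝ)
    (hclass : ∀ F : Matrix (Fin n) (Fin n) ℝ, Fᵀ = -F →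
      T F = a • (F * Fᵀ) + (b * Matrix.trace (F * Fᵀ)) • (1 : Matrix (Fin n) (Fin n) ℝ))
    (hdiv : ∀ F : (Fin n → ℝ) → Matrix (Fin n) (Fin n) ℝ,
      (∀ i j, ContDiff ℝ (⊤ : ℕ∞) fun x => F x i j) →
      (∀ x, (F x)ᵀ = -(F x)) →
      (∀ x (i j k : Fin n),
        pderiv n (fun y => F y i j) k x + pderiv n (fun y => F y j k) i x
          + pderiv n (fun y => F y k i) j x = 0) →
      (∀ x (j : Fin n), ∑ k, pderiv n (fun y => F y k j) k x = 0) →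
      ∀ x (j : Fin n), ∑ i, pderiv n (fun y => T (F y) i j) i x = 0) :
    a + 4 * b = 0 := by
  classical
  set H : Fin n → Fin n → Fin n → ℝ := fun p q r =>
    if p = i2 ∧ ((q = i0 ∧ r = i1) ∨ (q = i1 ∧ r = i0)) then 1 else 0 with hH
  set G : Fin n → Fin n → Fin n → ℝ := fun i j m => H j i m - H i j m with hG
  set F : (Fin n → ℝ) → Matrix (Fin n) (Fin n) ℝ :=
    fun y => Matrix.of fun i j => ∑ m, G i j m * y m with hF
  -- derivative of each entry
  have hy : ∀ (m : Fin n) (x : Fin n → ℝ),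
      HasFDerivAt (fun y : Fin n → ℝ => y m)
      ((ContinuousLinearMap.proj m : (Fin n → ℝ) →L[ℝ] ℝ)) x :=
    fun m x => (ContinuousLinearMap.proj m : (Fin n → ℝ) →L[ℝ] ℝ).hasFDerivAt
  have hpd : ∀ (i j k : Fin n) (x : Fin n → ℝ),
      pderiv n (fun y => F y i j) k x = G i j k := by
    intro i j k x
    have hd : HasFDerivAt (fun y : Fin n → ℝ => ∑ m, G i j m * y m)
        (∑ m, G i j m • (ContinuousLinearMap.proj m : (Fin n → ℝ) →L[ℝ] ℝ)) x :=
      HasFDerivAt.fun_sum fun m _ => (hy m x).const_mul (G i j m)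
    have : (fun y => F y i j) = fun y : Fin n → ℝ => ∑ m, G i j m * y m := rfl
    rw [pderiv, this, hd.fderiv]
    simp [ContinuousLinearMap.sum_apply, Pi.single_apply, Finset.sum_ite_eq']
  -- smoothness
  have hsmooth : ∀ i j, ContDiff ℝ (⊤ : ℕ∞) fun x => F x i j := by
    intro i j
    have : (fun x => F x i j) = fun y : Fin n → ℝ => ∑ m, G i j m * y m := rfl
    rw [this]
    exact ContDiff.sum fun m _ =>
      ((ContinuousLinearMap.proj m : (Fin n → ℝ) →L[ℝ] ℝ).contDiff).const_smul (G i j m)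
  -- antisymmetry
  have hanti : ∀ x, (F x)ᵀ = -(F x) := by
    intro x
    ext i j
    simp only [transpose_apply, Matrix.neg_apply, hF, Matrix.of_apply, hG]
    rw [← Finset.sum_neg_distrib]
    exact Finset.sum_congr rfl fun m _ => by ring
  -- symmetry of H in last two arguments
  have Hsymm : ∀ p q r, H p q r = H p r q := by
    intro p q r
    simp only [hH]
    exact if_congr (by tauto) rfl rfl
  -- closedness
  have hclosed : ∀ (x : Fin n → ℝ) (i j k : Fin n),
      pderiv n (fun y => F y i j) k x + pderiv n (fun y => F y j k) i x
        + pderiv n (fun y => F y k i) j x = 0 := by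
    intro x i j k
    rw [hpd, hpd, hpd]
    simp only [hG]
    rw [Hsymm j i k, Hsymm k j i, Hsymm i k j]
    ring
  -- coclosedness
  have hcoclosed : ∀ (x : Fin n → ℝ) (j : Fin n),
      ∑ k, pderiv n (fun y => F y k j) k x = 0 := by
    intro x j
    refine Finset.sum_eq_zero fun k _ => ?_
    rw [hpd]
    simp only [hG, hH]
    have e1 : ¬ (j = i2 ∧ ((k = i0 ∧ k = i1) ∨ (k = i1 ∧ k = i0))) := by
      rintro ⟨-, ⟨rfl, h⟩ | ⟨rfl, h⟩⟩ <;> exact h01 (by simp [h]) 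
    have e2 : ¬ (k = i2 ∧ ((j = i0 ∧ k = i1) ∨ (j = i1 ∧ k = i0))) := by
      rintro ⟨rfl, ⟨-, h⟩ | ⟨-, h⟩⟩
      · exact h12 h.symm
      · exact h02 h.symm
    rw [if_neg e1, if_neg e2, sub_zero]
  -- explicit row values
  have hrow0 : ∀ (y : Fin n → ℝ) j, F y i0 j = if j = i2 then y i1 else 0 := by
    intro y j
    show (∑ m, G i0 j m * y m) = _
    have hv : ∀ m, G i0 j m = if j = i2 ∧ m = i1 then 1 else 0 := by
      intro m
      simp only [hG, hH]
      have hneg : ¬ (i0 = i2 ∧ ((j = i0 ∧ m = i1) ∨ (j = i1 ∧ m = i0))) := fun h => h02 h.1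
      rw [if_neg hneg, sub_zero]
      exact if_congr (by tauto) rfl rfl
    simp only [hv]
    by_cases hj : j = i2 <;>
      simp [hj, ite_mul, one_mul, zero_mul, Finset.sum_ite_eq', Finset.mem_univ]
  have hrow1 : ∀ (y : Fin n → ℝ) j, F y i1 j = if j = i2 then y i0 else 0 := by
    intro y j
    show (∑ m, G i1 j m * y m) = _
    have hv : ∀ m, G i1 j m = if j = i2 ∧ m = i0 then 1 else 0 := by
      intro m
      simp only [hG, hH]
      have hneg : ¬ (i1 = i2 ∧ ((j = i0 ∧ m = i1) ∨ (j = i1 ∧ m = i0))) := fun h => h12 h.1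
      rw [if_neg hneg, sub_zero]
      exact if_congr (by tauto) rfl rfl
    simp only [hv]
    by_cases hj : j = i2 <;>
      simp [hj, ite_mul, one_mul, zero_mul, Finset.sum_ite_eq', Finset.mem_univ]
  have hrow2 : ∀ (y : Fin n → ℝ) j, F y i2 j =
      if j = i0 then -y i1 else if j = i1 then -y i0 else 0 := by
    intro y j
    show (∑ m, G i2 j m * y m) = _
    have hv : ∀ m, G i2 j m =
        -(if j = i0 ∧ m = i1 then 1 else if j = i1 ∧ m = i0 then 1 else 0) := by
      intro m
      simp only [hG, hH]
      have hneg : ¬ (j = i2 ∧ ((i2 = i0 ∧ m = i1) ∨ (i2 = i1 ∧ m = i0))) := by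
        rintro ⟨-, ⟨h, -⟩ | ⟨h, -⟩⟩
        · exact h02 h.symm
        · exact h12 h.symm
      rw [if_neg hneg, zero_sub]
      congr 1
      by_cases hj0 : j = i0
      · have hj1 : ¬ j = i1 := by rw [hj0]; exact h01
        by_cases hm : m = i1 <;> simp [hj0, hj1, hm, h01]
      · by_cases hj1 : j = i1
        · by_cases hm : m = i0 <;> simp [hj0, hj1, hm]
        · simp [hj0, hj1]
    simp only [hv]
    by_cases hj0 : j = i0
    · have hj1 : ¬ j = i1 := by rw [hj0]; exact h01
      simp [hj0, hj1, h01, Finset.sum_ite_eq', Finset.sum_neg_distrib]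
    · by_cases hj1 : j = i1 <;>
        simp [hj0, hj1, h01, Ne.symm h01, Finset.sum_ite_eq', Finset.sum_neg_distrib]
  have hrowo : ∀ (y : Fin n → ℝ) i, i ≠ i0 → i ≠ i1 → i ≠ i2 → ∀ j, F y i j = 0 := by
    intro y i hi0 hi1 hi2 j
    show (∑ m, G i j m * y m) = _
    refine Finset.sum_eq_zero fun m _ => ?_
    have : G i j m = 0 := by
      simp only [hG, hH]
      have hneg1 : ¬ (j = i2 ∧ ((i = i0 ∧ m = i1) ∨ (i = i1 ∧ m = i0))) := by
        rintro ⟨-, ⟨h, -⟩ | ⟨h, -⟩⟩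
        · exact hi0 h
        · exact hi1 h
      have hneg2 : ¬ (i = i2 ∧ ((j = i0 ∧ m = i1) ∨ (j = i1 ∧ m = i0))) := fun h => hi2 h.1
      rw [if_neg hneg1, if_neg hneg2, sub_zero]
    rw [this, zero_mul]
  -- column i2 values
  have hcol : ∀ (y : Fin n → ℝ) i, F y i i2 =
      if i = i0 then y i1 else if i = i1 then y i0 else 0 := by
    intro y i
    by_cases e0 : i = i0
    · rw [e0, hrow0]; simp
    · by_cases e1 : i = i1
      · rw [e1, hrow1]; simp [Ne.symm h01]
      · by_cases e2 : i = i2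
        · rw [e2, hrow2]
          simp [Ne.symm h02, Ne.symm h12]
        · rw [hrowo y i e0 e1 e2]
          simp [e0, e1]
  -- FFᵀ column i0
  have hFF : ∀ (y : Fin n → ℝ) i, (F y * (F y)ᵀ) i i0 =
      (if i = i0 then y i1 else if i = i1 then y i0 else 0) * y i1 := by
    intro y i
    rw [Matrix.mul_apply]
    have : ∀ k, F y i k * (F y)ᵀ k i0 = if k = i2 then F y i i2 * y i1 else 0 := by
      intro k
      rw [Matrix.transpose_apply, hrow0]
      by_cases hk : k = i2 <;> simp [hk]
    simp only [this, Finset.sum_ite_eq', Finset.mem_univ, if_true]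
    rw [hcol]
  -- trace
  have htr : ∀ (y : Fin n → ℝ),
      Matrix.trace (F y * (F y)ᵀ) = 2 * (y i0 * y i0 + y i1 * y i1) := by
    intro y
    have hin : ∀ k, (∑ l, F y k l * F y k l) =
        (if k = i0 then y i1 * y i1 else 0) + (if k = i1 then y i0 * y i0 else 0)
          + (if k = i2 then y i1 * y i1 + y i0 * y i0 else 0) := by
      intro k
      by_cases e0 : k = i0
      · rw [e0]
        have hql : ∀ l, F y i0 l * F y i0 l = if l = i2 then y i1 * y i1 else 0 := by
          intro l; rw [hrow0]; by_cases hl : l = i2 <;> simp [hl]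
        simp [hql, Finset.sum_ite_eq', h01, h02]
      · by_cases e1 : k = i1
        · rw [e1]
          have hql : ∀ l, F y i1 l * F y i1 l = if l = i2 then y i0 * y i0 else 0 := by
            intro l; rw [hrow1]; by_cases hl : l = i2 <;> simp [hl]
          simp [hql, Finset.sum_ite_eq', Ne.symm h01, h12]
        · by_cases e2 : k = i2
          · rw [e2]
            have hql : ∀ l, F y i2 l * F y i2 l =
                (if l = i0 then y i1 * y i1 else 0) + (if l = i1 then y i0 * y i0 else 0) := by
              intro l
              rw [hrow2]
              by_cases hl0 : l = i0
              · have hl1 : ¬ l = i1 := by rw [hl0]; exact h01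
                simp [hl0, hl1, h01, Ne.symm h01] <;> try ring
              · by_cases hl1 : l = i1 <;> simp [hl0, hl1, Ne.symm h01] <;> try ring
            simp [hql, Finset.sum_add_distrib, Finset.sum_ite_eq', Ne.symm h02, Ne.symm h12]
            try ring
          · have hql : ∀ l, F y k l * F y k l = 0 := by
              intro l; rw [hrowo y k e0 e1 e2]; ring
            simp [hql, e0, e1, e2]
    have : Matrix.trace (F y * (F y)ᵀ) = ∑ k, ∑ l, F y k l * F y k l := by
      rw [Matrix.trace]
      refine Finset.sum_congr rfl fun k _ => ?_
      rw [Matrix.diag_apply, Matrix.mul_apply]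
      exact Finset.sum_congr rfl fun l _ => by rw [Matrix.transpose_apply]
    rw [this]
    simp only [hin]
    simp [Finset.sum_add_distrib, Finset.sum_ite_eq']
    ring
  -- entries of T ∘ F in column i0
  have hTF : ∀ (y : Fin n → ℝ) i, T (F y) i i0 =
      (if i = i0 then a * (y i1 * y i1) + b * (2 * (y i0 * y i0 + y i1 * y i1)) else 0)
        + (if i = i1 then a * (y i0 * y i1) else 0) := by
    intro y i
    have h := hclass (F y) (hanti y)
    have h2 : T (F y) i i0 = a * ((F y * (F y)ᵀ) i i0)
        + (b * Matrix.trace (F y * (F y)ᵀ)) * (if i = i0 then (1:ℝ) else 0) := by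
      rw [h]
      simp [Matrix.add_apply, Matrix.smul_apply, Matrix.one_apply, smul_eq_mul]
    rw [h2, hFF, htr]
    by_cases e0 : i = i0
    · simp [e0, h01] <;> try ring
    · by_cases e1 : i = i1 <;> simp [e0, e1, h01, Ne.symm h01] <;> try ring
  -- derivative of each summand of the divergence
  have hterm : ∀ (i : Fin n) (x : Fin n → ℝ),
      pderiv n (fun y => T (F y) i i0) i x =
        (if i = i0 then 4 * b * x i0 else 0) + (if i = i1 then a * x i0 else 0) := by
    intro i x
    have hfun : (fun y => T (F y) i i0) = fun y : Fin n → ℝ =>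
        (if i = i0 then a * (y i1 * y i1) + b * (2 * (y i0 * y i0 + y i1 * y i1)) else 0)
          + (if i = i1 then a * (y i0 * y i1) else 0) := funext fun y => hTF y i
    rw [hfun]
    by_cases e0 : i = i0
    · rw [e0]
      simp only [eq_self_iff_true, if_true, h01, if_false, add_zero]
      have hd : HasFDerivAt (fun y : Fin n → ℝ =>
          a * (y i1 * y i1) + b * (2 * (y i0 * y i0 + y i1 * y i1)))
          ((a • (x i1 • (ContinuousLinearMap.proj i1 : (Fin n → ℝ) →L[ℝ] ℝ)
            + x i1 • ContinuousLinearMap.proj i1))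
          + b • ((2:ℝ) • ((x i0 • (ContinuousLinearMap.proj i0 : (Fin n → ℝ) →L[ℝ] ℝ)
            + x i0 • ContinuousLinearMap.proj i0)
            + (x i1 • (ContinuousLinearMap.proj i1 : (Fin n → ℝ) →L[ℝ] ℝ)
            + x i1 • ContinuousLinearMap.proj i1)))) x :=
        (((hy i1 x).mul (hy i1 x)).const_mul a).add
          ((((hy i0 x).mul (hy i0 x)).add ((hy i1 x).mul (hy i1 x))).const_mul 2 |>.const_mul b)
      rw [pderiv, hd.fderiv]
      simp [Pi.single_apply, Ne.symm h01]
      ring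
    · by_cases e1 : i = i1
      · rw [e1]
        simp only [eq_self_iff_true, if_true, Ne.symm h01, if_false, zero_add]
        have hd : HasFDerivAt (fun y : Fin n → ℝ => a * (y i0 * y i1))
            (a • (x i0 • (ContinuousLinearMap.proj i1 : (Fin n → ℝ) →L[ℝ] ℝ)
              + x i1 • ContinuousLinearMap.proj i0)) x :=
          ((hy i0 x).mul (hy i1 x)).const_mul a
        rw [pderiv, hd.fderiv]
        simp [Pi.single_apply, h01]
        try ring
      · simp only [if_neg e0, if_neg e1, add_zero]
        rw [pderiv]
        simp
  -- conclude
  have h0 := hdiv F hsmooth hanti hclosed hcoclosed (fun _ => (1:ℝ)) i0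
  rw [Finset.sum_congr rfl (fun i _ => hterm i (fun _ => 1))] at h0
  simp [Finset.sum_add_distrib, Finset.sum_ite_eq'] at h0
  linarith

/-- If an `O(n)`-equivariant quadratic map `T` on antisymmetric matrices is of the
classified form `T(F) = a FFᵀ + b tr(FFᵀ) I` (hypothesis (i), the first-fundamental-
theorem classification), and moreover has vanishing divergence for every smooth
closed and co-closed 2-form `F` on `ℝⁿ` (hypothesis (ii)), then
`T(F) = c (FFᵀ - (1/4) tr(FFᵀ) I)` for some constant `c`, i.e. `T` is a constant
multiple of the electromagnetic stress-energy tensor. -/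
theorem equivariant_divergence_free_is_stress_energy
    (n : ℕ) (hn : 2 ≤ n)
    (T : Matrix (Fin n) (Fin n) ℝ → Matrix (Fin n) (Fin n) ℝ)
    (a b : ℝ)
    (hclass : ∀ F : Matrix (Fin n) (Fin n) ℝ, Fᵀ = -F →
      T F = a • (F * Fᵀ) + (b * Matrix.trace (F * Fᵀ)) • (1 : Matrix (Fin n) (Fin n) ℝ))
    (hdiv : ∀ F : (Fin n → ℝ) → Matrix (Fin n) (Fin n) ℝ,
      (∀ i j, ContDiff ℝ (⊤ : ℕ∞) fun x => F x i j) →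
      (∀ x, (F x)ᵀ = -(F x)) →
      (∀ x (i j k : Fin n),
        pderiv n (fun y => F y i j) k x + pderiv n (fun y => F y j k) i x
          + pderiv n (fun y => F y k i) j x = 0) →
      (∀ x (j : Fin n), ∑ k, pderiv n (fun y => F y k j) k x = 0) →
      ∀ x (j : Fin n), ∑ i, pderiv n (fun y => T (F y) i j) i x = 0) :
    ∃ c : ℝ, ∀ F : Matrix (Fin n) (Fin n) ℝ, Fᵀ = -F →
      T F = c • (F * Fᵀ - ((1 / 4) * Matrix.trace (F * Fᵀ)) •
        (1 : Matrix (Fin n) (Fin n) ℝ)) := by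
  rcases lt_or_ge n 3 with h3 | h3
  · -- n = 2
    have hn2 : n = 2 := by omega
    subst hn2
    refine ⟨2 * a + 4 * b, fun F hF => ?_⟩
    have e00 : F 0 0 = 0 := by
      have := congrFun (congrFun hF 0) 0
      simp only [Matrix.transpose_apply, Matrix.neg_apply] at this
      linarith
    have e11 : F 1 1 = 0 := by
      have := congrFun (congrFun hF 1) 1
      simp only [Matrix.transpose_apply, Matrix.neg_apply] at this
      linarith
    have e10 : F 1 0 = -F 0 1 := by
      have := congrFun (congrFun hF 0) 1
      simpa only [Matrix.transpose_apply, Matrix.neg_apply] using this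
    rw [hclass F hF]
    ext i j
    fin_cases i <;> fin_cases j <;>
      simp [Matrix.mul_apply, Matrix.trace, Matrix.diag, Fin.sum_univ_two,
        Matrix.one_apply, Matrix.add_apply, Matrix.smul_apply, Matrix.sub_apply,
        Matrix.transpose_apply, smul_eq_mul, e00, e11, e10] <;>
      ring
  · -- n ≥ 3
    have hba : a + 4 * b = 0 :=
      key n ⟨0, by omega⟩ ⟨1, by omega⟩ ⟨2, by omega⟩
        (by simp [Fin.ext_iff]) (by simp [Fin.ext_iff]) (by simp [Fin.ext_iff])
        T a b hclass hdiv
    refine ⟨a, fun F hF => ?_⟩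
    have hs : b * Matrix.trace (F * Fᵀ) = -(a * ((1 / 4) * Matrix.trace (F * Fᵀ))) := by
      have : b = -(a / 4) := by linarith
      rw [this]; ring
    rw [hclass F hF, smul_sub, smul_smul, hs, neg_smul, ← sub_eq_add_neg]
end

section
/- For a positive definite metric, the super-energy tensor T₂(g,ω) of a p-form ω vanishes if and only if ω = 0. -/
/-! Taking the trace of `T` gives `((2(p+1) - n) / (2 (p+1)!)) |ω|²`, since contracting the
first term over `i` recovers the full sum `|ω|²` of squared components. Away from `n = 2(p+1)`
the coefficient is nonzero, so `T = 0` forces `|ω|² = 0`, and a sum of squares vanishes only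
when every component does. -/

open BigOperators

/-- The super-energy tensor of a form of degree `p+1` on Euclidean `ℝⁿ`
(orthonormal coordinates, indices raised trivially):
`T_{ij} = (1/p!) Σ_k ω_{i k₁…k_p} ω_{j k₁…k_p}
  - (1/(2(p+1)!)) (Σ_k ω_{k₀…k_p}²) δ_{ij}`. -/
noncomputable def superEnergyEuclidean (n p : ℕ)
    (ω : (Fin (p + 1) → Fin n) → ℝ) (i j : Fin n) : ℝ :=
  (1 / (Nat.factorial p : ℝ)) *
      ∑ k : Fin p → Fin n, ω (Fin.cons i k) * ω (Fin.cons j k)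
    - (1 / (2 * (Nat.factorial (p + 1) : ℝ))) *
      (∑ k : Fin (p + 1) → Fin n, ω k ^ 2) * (if i = j then 1 else 0)

theorem Fin.sum_univ_sum_cons {α M : Type*} [Fintype α] [AddCommMonoid M] {p : ℕ}
    (f : (Fin (p + 1) → α) → M) :
    ∑ i : α, ∑ k : Fin p → α, f (Fin.cons i k) = ∑ k : Fin (p + 1) → α, f k := by
  rw [← Fintype.sum_prod_type']
  exact Fintype.sum_equiv (Fin.consEquiv fun _ => α) _ _ fun _ => rfl

theorem trace_superEnergyEuclidean (n p : ℕ) (ω : (Fin (p + 1) → Fin n) → ℝ) :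
    ∑ i, superEnergyEuclidean n p ω i i
      = (2 * (p + 1) - n) / (2 * (p + 1).factorial) * ∑ k, ω k ^ 2 := by
  simp only [superEnergyEuclidean, if_true, mul_one, Finset.sum_sub_distrib, ← Finset.mul_sum,
    ← sq, Finset.sum_const, Finset.card_univ, Fintype.card_fin, nsmul_eq_mul]
  rw [Fin.sum_univ_sum_cons (fun k => ω k ^ 2), Nat.factorial_succ]
  push_cast
  field_simp

theorem eq_zero_of_sum_sq_eq_zero {ι : Type*} [Fintype ι] {ω : ι → ℝ}
    (h : ∑ k, ω k ^ 2 = 0) : ω = 0 := by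
  funext k
  simpa using (Finset.sum_eq_zero_iff_of_nonneg fun k _ => sq_nonneg (ω k)).mp h k
    (Finset.mem_univ k)

theorem superEnergyEuclidean_zero (n p : ℕ) : superEnergyEuclidean n p 0 = 0 := by
  funext i j
  simp [superEnergyEuclidean]

theorem superEnergy_eq_zero_iff_form_eq_zero_general
    (n p : ℕ) (hdim : n ≠ 2 * (p + 1))
    (ω : (Fin (p + 1) → Fin n) → ℝ) :
    (∀ i j, superEnergyEuclidean n p ω i j = 0) ↔ ω = 0 := by
  refine ⟨fun hT => eq_zero_of_sum_sq_eq_zero ?_, fun hω _ _ => by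
    rw [hω, superEnergyEuclidean_zero]; rfl⟩
  have htrace := trace_superEnergyEuclidean n p ω
  simp only [hT, Finset.sum_const_zero] at htrace
  have hcoeff : (2 * (p + 1) - n : ℝ) / (2 * (p + 1).factorial) ≠ 0 := by
    refine div_ne_zero (sub_ne_zero.mpr ?_) (by positivity)
    exact_mod_cast hdim.symm
  exact (mul_eq_zero.mp htrace.symm).resolve_left hcoeff

/-- For a positive definite (Euclidean) metric, the super-energy tensor of an
alternating form `ω` of degree `p+1 ≤ n` vanishes if and only if `ω = 0`
(with the degenerate case `n = 2(p+1)`, where the trace argument fails,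
excluded). -/
theorem superEnergy_eq_zero_iff_form_eq_zero
    (n p : ℕ) (hpn : p + 1 ≤ n) (hdim : n ≠ 2 * (p + 1))
    (ω : (Fin (p + 1) → Fin n) → ℝ)
    (halt : ∀ (k : Fin (p + 1) → Fin n) (σ : Equiv.Perm (Fin (p + 1))),
      ω (k ∘ σ) = (Equiv.Perm.sign σ : ℤ) * ω k) :
    (∀ i j, superEnergyEuclidean n p ω i j = 0) ↔ ω = 0 :=
  superEnergy_eq_zero_iff_form_eq_zero_general n p hdim ω
end
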